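/- arXiv:1303.3626 — 2 statements merged into one kernel-verified Lean document; each statement's English description precedes it below -/
import Mathlib

section
/- Let `t` be a valid Patricia trie in which every leaf label has length `ℓ`, and let `v : List Bool` with `|v| = ℓ`. If `search v t` is an internal node `node s l r`, then `s` is not a prefix of `v`. (Post-condition (6) of the paper's search operation, Lemma `search-lem`.) -/
inductive PTrie : Type
  | leaf (s : List Bool) : PTrie
  | node (s : List Bool) (l r : PTrie) : PTrie

/-- Label at the root of a trie. -/
def lbl : PTrie → List Bool
  | .leaf s => s
  | .node s _ _ => s

/-- A trie is valid if for every internal node `node s l r`,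
`s ++ [false]` is a prefix of `lbl l` and `s ++ [true]` is a prefix of `lbl r`. -/
def Valid : PTrie → Prop
  | .leaf _ => True
  | .node s l r => ((s ++ [false]) <+: lbl l) ∧ ((s ++ [true]) <+: lbl r) ∧ Valid l ∧ Valid r

/-- Subtree at a position: descend left on `false`, right on `true`. -/
def subtreeAt : PTrie → List Bool → Option PTrie
  | t, [] => some t
  | .leaf _, _ :: _ => none
  | .node _ l r, b :: π => subtreeAt (if b then r else l) π

/-- Set of binary strings appearing at the leaves. -/
def leafLabels : PTrie → Set (List Bool)
  | .leaf s => {s}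
  | .node _ l r => leafLabels l ∪ leafLabels r

/-- Sequential search. -/
def search (v : List Bool) : PTrie → PTrie
  | .leaf s => .leaf s
  | .node s l r =>
    if s <+: v ∧ s ≠ v then
      (if v.getD s.length false then search v r else search v l)
    else .node s l r

/-- Position of the node returned by `search`. -/
def searchPos (v : List Bool) : PTrie → List Bool
  | .leaf _ => []
  | .node s l r =>
    if s <+: v ∧ s ≠ v then
      (if v.getD s.length false then true :: searchPos v r else false :: searchPos v l)
    else []

/-- Replace the subtree at a position. -/
def replaceAt : PTrie → List Bool → PTrie → PTrie
  | _, [], u => u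
  | .leaf s, _ :: _, _ => .leaf s
  | .node s l r, b :: π, u =>
    if b then .node s l (replaceAt r π u) else .node s (replaceAt l π u) r

/-- Longest common prefix of two binary strings. -/
def lcp : List Bool → List Bool → List Bool
  | a :: as, b :: bs => if a = b then a :: lcp as bs else []
  | _, _ => []

/-- Join two tries under a new internal node labelled by the
longest common prefix of their labels. -/
def join (t₁ t₂ : PTrie) : PTrie :=
  if (lbl t₁).getD (lcp (lbl t₁) (lbl t₂)).length true then
    .node (lcp (lbl t₁) (lbl t₂)) t₂ t₁
  else
    .node (lcp (lbl t₁) (lbl t₂)) t₁ t₂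

/-- Sequential insert. -/
def insertT (v : List Bool) : PTrie → PTrie
  | .node s l r =>
    if s <+: v ∧ s ≠ v then
      (if v.getD s.length false then .node s l (insertT v r) else .node s (insertT v l) r)
    else join (.node s l r) (.leaf v)
  | .leaf s => join (.leaf s) (.leaf v)

/-!
The search stops at an internal node `node s l r` only when `s` is not a proper prefix of `v`,
so `s <+: v` would force `s = v`. But in a valid trie `s ++ [false]` is a prefix of every leaf
label below `l`, so `s` is strictly shorter than the leaves, which all have the length of `v`.
-/

theorem leafLabels_nonempty : ∀ t : PTrie, (leafLabels t).Nonempty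
  | .leaf s => ⟨s, rfl⟩
  | .node _ l _ => (leafLabels_nonempty l).mono Set.subset_union_left

theorem Valid.lbl_prefix_of_mem_leafLabels {t : PTrie} (hv : Valid t) {w : List Bool}
    (hw : w ∈ leafLabels t) : lbl t <+: w := by
  induction t with
  | leaf s => exact (Set.mem_singleton_iff.mp hw) ▸ List.prefix_refl s
  | node s l r ihl ihr =>
    obtain ⟨hl, hr, hvl, hvr⟩ := hv
    rcases hw with hw | hw
    · exact (s.prefix_append [false]).trans (hl.trans (ihl hvl hw))
    · exact (s.prefix_append [true]).trans (hr.trans (ihr hvr hw))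

theorem Valid.length_lt_of_mem_leafLabels_left {s : List Bool} {l r : PTrie}
    (hv : Valid (.node s l r)) {w : List Bool} (hw : w ∈ leafLabels l) :
    s.length < w.length := by
  have hpre : s ++ [false] <+: w := hv.1.trans (hv.2.2.1.lbl_prefix_of_mem_leafLabels hw)
  simpa using hpre.length_le

section search

variable (v : List Bool)

theorem Valid.search {t : PTrie} (hv : Valid t) : Valid (search v t) := by
  induction t with
  | leaf s => exact hv
  | node s l r ihl ihr =>
    rw [_root_.search]
    split_ifs
    exacts [ihr hv.2.2.2, ihl hv.2.2.1, hv]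

theorem leafLabels_search_subset (t : PTrie) : leafLabels (search v t) ⊆ leafLabels t := by
  induction t with
  | leaf s => exact subset_rfl
  | node s l r ihl ihr =>
    rw [search]
    split_ifs
    exacts [ihr.trans Set.subset_union_right, ihl.trans Set.subset_union_left, subset_rfl]

theorem not_proper_prefix_of_search_eq_node {t : PTrie} {s : List Bool} {l r : PTrie}
    (h : search v t = .node s l r) : ¬ (s <+: v ∧ s ≠ v) := by
  induction t with
  | leaf s' => simp [search] at h
  | node s' l' r' ihl ihr =>
    rw [search] at h
    split_ifs at h with hstep
    exacts [ihr h, ihl h, by cases h; exact hstep]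

end search

/-- Post-condition (6) of the search operation: if search returns an internal
node, then its label is not a prefix of the key. -/
theorem search_internal_label_not_prefix (t : PTrie) (ℓ : ℕ) (hv : Valid t)
    (hleaf : ∀ s ∈ leafLabels t, s.length = ℓ)
    (v : List Bool) (hvlen : v.length = ℓ)
    (s : List Bool) (l r : PTrie)
    (h : search v t = PTrie.node s l r) :
    ¬ (s <+: v) := by
  intro hsv
  have hs_eq : s = v := not_not.mp fun hne => not_proper_prefix_of_search_eq_node v h ⟨hsv, hne⟩
  have hvnode : Valid (.node s l r) := h ▸ hv.search v
  obtain ⟨w, hw⟩ := leafLabels_nonempty l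
  have hwt : w ∈ leafLabels t :=
    leafLabels_search_subset v t (h ▸ Set.mem_union_left _ hw)
  have hlt := hvnode.length_lt_of_mem_leafLabels_left hw
  rw [hs_eq, hvlen, hleaf w hwt] at hlt
  exact lt_irrefl ℓ hlt
end

section
/- Let `t` be a valid Patricia trie and `π` a position with `subtreeAt t π = some (node s c₀ c₁)` where for some bit `b` the child `c_b` equals `leaf v_d`; write `u'` for the other child. Suppose neither of `lbl u'` and `v_i` is a prefix of the other, and that whenever `π = π₀ ++ [i]` is nonempty with `subtreeAt t π₀ = some (node s₀ l₀ r₀)`, the string `s₀ ++ [i]` is a prefix of `v_i`. Then `replaceAt t π (join u' (leaf v_i))` is valid and `leafLabels (replaceAt t π (join u' (leaf v_i))) = (leafLabels t \ {v_d}) ∪ {v_i}`. (Special cases 2–3 of the paper's replace operation: Case 5 of Invariant 1 and Case 2 of Lemma `successful-special-mov-lem`.) -/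
/-!
Replacing the subtree at `π` by a valid trie `u` keeps the trie valid as soon as `lbl u` still
extends the branching prefix `s₀ ++ [i]` of the parent node, and, since sibling subtrees of a valid
trie have disjoint leaves, it trades the leaves of the old subtree for those of `u`. Here
`u = join u' (leaf vi)` is valid because `lbl u'` and `vi` are incomparable; its label
`lcp (lbl u') vi` extends `s₀ ++ [i]` because both `vi` and (through `s`) `lbl u'` do; and the
leaves of the old subtree are `vd` together with those of `u'`.
-/

theorem prefix_lcp : ∀ {p a b : List Bool}, p <+: a → p <+: b → p <+: lcp a b
  | [], _, _, _, _ => List.nil_prefix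
  | _ :: _, [], _, ha, _ => absurd ha (by simp)
  | _ :: _, _ :: _, [], _, hb => absurd hb (by simp)
  | x :: p, y :: a, z :: b, ha, hb => by
    rw [List.cons_prefix_cons] at ha hb
    obtain ⟨rfl, ha⟩ := ha
    obtain ⟨rfl, hb⟩ := hb
    simpa [lcp] using prefix_lcp ha hb

theorem exists_lcp_append_prefix : ∀ {a b : List Bool}, ¬ a <+: b → ¬ b <+: a →
    ∃ x, lcp a b ++ [x] <+: a ∧ lcp a b ++ [!x] <+: b
  | [], _, hab, _ => absurd List.nil_prefix hab
  | _ :: _, [], _, hba => absurd List.nil_prefix hba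
  | x :: a, y :: b, hab, hba => by
    by_cases hxy : x = y
    · subst hxy
      simp only [List.cons_prefix_cons, true_and] at hab hba
      obtain ⟨z, hza, hzb⟩ := exists_lcp_append_prefix hab hba
      exact ⟨z, by simpa [lcp] using hza, by simpa [lcp] using hzb⟩
    · obtain rfl : y = !x := by cases x <;> cases y <;> simp_all
      exact ⟨x, by simp [lcp], by simp [lcp]⟩

theorem getD_length_eq_of_append_prefix {p a : List Bool} {x d : Bool} (h : p ++ [x] <+: a) :
    a.getD p.length d = x := by
  obtain ⟨r, rfl⟩ := h
  simp [List.getD_eq_getElem?_getD]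

theorem lbl_join (t₁ t₂ : PTrie) : lbl (join t₁ t₂) = lcp (lbl t₁) (lbl t₂) := by
  unfold join; split <;> rfl

theorem leafLabels_join (t₁ t₂ : PTrie) :
    leafLabels (join t₁ t₂) = leafLabels t₁ ∪ leafLabels t₂ := by
  unfold join; split <;> simp only [leafLabels, Set.union_comm]

theorem valid_join {t₁ t₂ : PTrie} (h₁₂ : ¬ lbl t₁ <+: lbl t₂) (h₂₁ : ¬ lbl t₂ <+: lbl t₁)
    (h₁ : Valid t₁) (h₂ : Valid t₂) : Valid (join t₁ t₂) := by
  obtain ⟨x, hx₁, hx₂⟩ := exists_lcp_append_prefix h₁₂ h₂₁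
  unfold join
  rw [getD_length_eq_of_append_prefix hx₁]
  cases x
  · exact ⟨hx₁, hx₂, h₁, h₂⟩
  · exact ⟨hx₂, hx₁, h₂, h₁⟩

theorem subtreeAt_append (t : PTrie) (π₁ π₂ : List Bool) :
    subtreeAt t (π₁ ++ π₂) = (subtreeAt t π₁).bind (subtreeAt · π₂) := by
  induction π₁ generalizing t with
  | nil => rfl
  | cons b π₁ ih => cases t <;> simp only [List.cons_append, subtreeAt, ih, Option.bind_none]

namespace Valid

theorem child {s : List Bool} {l r : PTrie} (hv : Valid (.node s l r)) (b : Bool) :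
    s ++ [b] <+: lbl (if b then r else l) ∧ Valid (if b then r else l) := by
  cases b
  · exact ⟨hv.1, hv.2.2.1⟩
  · exact ⟨hv.2.1, hv.2.2.2⟩

theorem lbl_prefix_of_mem {t : PTrie} (hv : Valid t) {w : List Bool} (hw : w ∈ leafLabels t) :
    lbl t <+: w := by
  induction t with
  | leaf s => exact (Set.mem_singleton_iff.1 hw).symm ▸ List.prefix_rfl
  | node s l r ihl ihr =>
    rcases hw with hw | hw
    · exact (List.prefix_append s _).trans (hv.1.trans (ihl hv.2.2.1 hw))
    · exact (List.prefix_append s _).trans (hv.2.1.trans (ihr hv.2.2.2 hw))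

theorem disjoint_leafLabels {s : List Bool} {l r : PTrie} (hv : Valid (.node s l r)) :
    Disjoint (leafLabels l) (leafLabels r) := by
  refine Set.disjoint_left.2 fun w hl hr => ?_
  have hf := hv.1.trans (hv.2.2.1.lbl_prefix_of_mem hl)
  have ht := hv.2.1.trans (hv.2.2.2.lbl_prefix_of_mem hr)
  rcases List.prefix_or_prefix_of_prefix hf ht with h | h <;> simp at h

theorem subtree {t n : PTrie} {π : List Bool} (hv : Valid t)
    (hn : subtreeAt t π = some n) : Valid n := by
  induction π generalizing t with
  | nil => exact Option.some.inj hn ▸ hv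
  | cons b π ih =>
    cases t with
    | leaf => cases hn
    | node s l r => exact ih (hv.child b).2 hn

theorem append_prefix_lbl_of_subtreeAt {t l r n : PTrie} {s : List Bool}
    {π : List Bool} {i : Bool} (hv : Valid t) (hp : subtreeAt t π = some (.node s l r))
    (hn : subtreeAt t (π ++ [i]) = some n) : s ++ [i] <+: lbl n := by
  rw [subtreeAt_append, hp] at hn
  obtain rfl : (if i then r else l) = n := Option.some.inj hn
  exact ((hv.subtree hp).child i).1

theorem disjoint_leafLabels_child {s : List Bool} {l r : PTrie} (hv : Valid (.node s l r))
    (b : Bool) : Disjoint (leafLabels (if b then r else l)) (leafLabels (if b then l else r)) := by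
  cases b
  · exact hv.disjoint_leafLabels
  · exact hv.disjoint_leafLabels.symm

end Valid

theorem leafLabels_node_eq_child_union (s : List Bool) (l r : PTrie) (b : Bool) :
    leafLabels (.node s l r) =
      leafLabels (if b then r else l) ∪ leafLabels (if b then l else r) := by
  cases b
  · rfl
  · exact Set.union_comm _ _

theorem leafLabels_subset_of_subtreeAt {t n : PTrie} {π : List Bool}
    (hn : subtreeAt t π = some n) : leafLabels n ⊆ leafLabels t := by
  induction π generalizing t with
  | nil => exact (Option.some.inj hn).symm ▸ subset_rfl
  | cons b π ih =>
    cases t with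
    | leaf => cases hn
    | node s l r =>
      cases b
      · exact (ih hn).trans Set.subset_union_left
      · exact (ih hn).trans Set.subset_union_right

theorem lbl_replaceAt_cons (t : PTrie) (b : Bool) (π : List Bool) (u : PTrie) :
    lbl (replaceAt t (b :: π) u) = lbl t := by
  cases t <;> cases b <;> rfl

@[simp]
theorem replaceAt_nil (t u : PTrie) : replaceAt t [] u = u := by
  cases t <;> rfl

theorem valid_replaceAt {t u : PTrie} {π : List Bool} (hv : Valid t) (hu : Valid u)
    (hparent : ∀ π₀ i s₀ l₀ r₀, π = π₀ ++ [i] →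
      subtreeAt t π₀ = some (.node s₀ l₀ r₀) → s₀ ++ [i] <+: lbl u) :
    Valid (replaceAt t π u) := by
  induction π generalizing t with
  | nil => simpa using hu
  | cons b π ih =>
    cases t with
    | leaf => trivial
    | node s l r =>
      have hchild : Valid (replaceAt (if b then r else l) π u) :=
        ih (hv.child b).2 fun π₀ i s₀ l₀ r₀ he hs =>
          hparent (b :: π₀) i s₀ l₀ r₀ (by rw [he]; rfl) hs
      have hlbl : s ++ [b] <+: lbl (replaceAt (if b then r else l) π u) := by
        cases π with
        | nil => simpa using hparent [] b s l r rfl rfl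
        | cons => rw [lbl_replaceAt_cons]; exact (hv.child b).1
      cases b
      · exact ⟨hlbl, hv.2.1, hchild, hv.2.2.2⟩
      · exact ⟨hv.1, hlbl, hv.2.2.1, hchild⟩

theorem leafLabels_replaceAt {t n : PTrie} {π : List Bool} (hv : Valid t)
    (hn : subtreeAt t π = some n) (u : PTrie) :
    leafLabels (replaceAt t π u) = leafLabels t \ leafLabels n ∪ leafLabels u := by
  induction π generalizing t with
  | nil => obtain rfl := Option.some.inj hn; simp
  | cons b π ih =>
    cases t with
    | leaf => cases hn
    | node s l r =>
      have hdis := hv.disjoint_leafLabels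
      cases b
      · simp only [replaceAt, Bool.false_eq_true, if_false, leafLabels]
        have hsub := leafLabels_subset_of_subtreeAt (t := l) hn
        rw [ih hv.2.2.1 hn, Set.union_sdiff_distrib, (hdis.symm.mono_right hsub).sdiff_eq_left,
          Set.union_right_comm]
      · simp only [replaceAt, if_true, leafLabels]
        have hsub := leafLabels_subset_of_subtreeAt (t := r) hn
        rw [ih hv.2.2.2 hn, Set.union_sdiff_distrib, (hdis.mono_right hsub).sdiff_eq_left,
          Set.union_assoc]

/-- Special cases 2–3 of the replace operation. -/
theorem replace_special_case23 (t c₀ c₁ : PTrie) (s vd vi : List Bool)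
    (π : List Bool) (b : Bool)
    (hv : Valid t)
    (hsub : subtreeAt t π = some (PTrie.node s c₀ c₁))
    (hb : (if b then c₁ else c₀) = PTrie.leaf vd)
    (hinc1 : ¬ (lbl (if b then c₀ else c₁) <+: vi))
    (hinc2 : ¬ (vi <+: lbl (if b then c₀ else c₁)))
    (hparent : ∀ (π₀ : List Bool) (i : Bool) (s₀ : List Bool) (l₀ r₀ : PTrie),
        π = π₀ ++ [i] → subtreeAt t π₀ = some (PTrie.node s₀ l₀ r₀) →
        (s₀ ++ [i]) <+: vi) :
    Valid (replaceAt t π (join (if b then c₀ else c₁) (PTrie.leaf vi))) ∧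
    leafLabels (replaceAt t π (join (if b then c₀ else c₁) (PTrie.leaf vi))) =
      (leafLabels t \ {vd}) ∪ {vi} := by
  set u' := if b then c₀ else c₁
  have hnode := hv.subtree hsub
  have hu' : s ++ [!b] <+: lbl u' ∧ Valid u' := by cases b <;> exact hnode.child _
  have hjoin_parent : ∀ π₀ i s₀ l₀ r₀, π = π₀ ++ [i] →
      subtreeAt t π₀ = some (.node s₀ l₀ r₀) → s₀ ++ [i] <+: lbl (join u' (.leaf vi)) := by
    intro π₀ i s₀ l₀ r₀ hπ hs
    have hs₀s := hv.append_prefix_lbl_of_subtreeAt hs (hπ ▸ hsub)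
    rw [lbl_join]
    exact prefix_lcp (hs₀s.trans ((List.prefix_append _ _).trans hu'.1))
      (hparent π₀ i s₀ l₀ r₀ hπ hs)
  refine ⟨valid_replaceAt hv (valid_join hinc1 hinc2 hu'.2 trivial) hjoin_parent, ?_⟩
  have hdis := hnode.disjoint_leafLabels_child b
  have hu't : leafLabels u' ⊆ leafLabels t :=
    (Set.subset_union_right.trans (leafLabels_node_eq_child_union s c₀ c₁ b).ge).trans
      (leafLabels_subset_of_subtreeAt hsub)
  rw [hb] at hdis
  rw [leafLabels_replaceAt hv hsub, leafLabels_join, leafLabels_node_eq_child_union s c₀ c₁ b, hb]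
  simp only [leafLabels]
  rw [← Set.union_assoc, ← Set.sdiff_sdiff]
  exact congrArg (· ∪ {vi}) (Set.sdiff_union_of_subset (Set.subset_sdiff.2 ⟨hu't, hdis.symm⟩))
end
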